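/- For every fixed m ≥ 2, the ratio of the number of single-peaked (n,m)-elections to (m!/2)·2^{(m-1)n} tends to 1 as n → ∞. -/

import Mathlib

def SPwrt {m : ℕ} (V A : Equiv.Perm (Fin m)) : Prop :=
  ∀ c₁ c₂ c₃ : Fin m, ¬(A c₁ < A c₂ ∧ A c₂ < A c₃ ∧ V c₁ < V c₂ ∧ V c₃ < V c₂)

def SPElection {n m : ℕ} (P : Fin n → Equiv.Perm (Fin m)) : Prop :=
  ∃ A : Equiv.Perm (Fin m), ∀ i, SPwrt (P i) A

/-!
Relative to the identity axis, a single-peaked vote has ranks decreasing up to its peak and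
increasing after it, so it is determined by the set of nonzero ranks placed left of the peak,
and every such set occurs: there are `2^(m-1)` single-peaked votes for each axis. If `A` and its
reversal are both single-peaked for the axis `B`, then `A B⁻¹` has neither a peak nor a valley,
hence is monotone or antitone; so two axes have the same single-peaked votes only when they
are equal or reverse to each other. The `m!/2` distinct sets `S` of single-peaked votes thus all
have size `2^(m-1)` and pairwise intersections of size at most `2^(m-1) - 1`, and the
single-peaked elections form the union of the cubes `Sⁿ`. The union bound and the second
Bonferroni inequality squeeze its size between `(m!/2) 2^((m-1)n) - (m!/2)² (2^(m-1) - 1)^n`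
and `(m!/2) 2^((m-1)n)`.
-/

open Finset Equiv

theorem Equiv.Perm.eq_one_of_monotone {m : ℕ} {f : Perm (Fin m)} (hf : Monotone f) :
    f = 1 := by
  have h := (hf.strictMono_of_injective f.injective).range_inj strictMono_id
  ext x
  simp [h.1 (by simp [f.surjective.range_eq])]

theorem Equiv.Perm.eq_revPerm_of_antitone {m : ℕ} {f : Perm (Fin m)} (hf : Antitone f) :
    f = Fin.revPerm := by
  have h : f.trans Fin.revPerm = 1 :=
    Perm.eq_one_of_monotone fun a b hab => by simpa [Fin.rev_le_rev] using hf hab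
  ext1 x
  simpa using congrArg (fun g : Perm (Fin m) => Fin.rev (g x)) h

theorem Fin.revPerm_mul_revPerm {m : ℕ} : (Fin.revPerm * Fin.revPerm : Perm (Fin m)) = 1 := by
  ext; simp

theorem Fin.revPerm_mul_ne_self {m : ℕ} (hm : 2 ≤ m) (A : Perm (Fin m)) :
    Fin.revPerm * A ≠ A := by
  rw [Ne, mul_eq_right]
  intro h
  have := congrArg Fin.val (Perm.ext_iff.1 h ⟨0, by omega⟩)
  simp at this
  omega

namespace Finset

variable {α : Type*} {𝒮 : Finset (Finset α)} {s : ℕ}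

theorem sum_card_piFinset_const (hs : ∀ S ∈ 𝒮, #S = s) (n : ℕ) :
    ∑ S ∈ 𝒮, #(Fintype.piFinset fun _ : Fin n => S) = #𝒮 * s ^ n :=
  sum_const_nat fun S hS => by rw [Fintype.card_piFinset_const, hs S hS]

variable [DecidableEq α]

theorem card_inter_lt_of_card_eq_of_ne {S T : Finset α} (h : #S = #T) (hne : S ≠ T) :
    #(S ∩ T) < #S :=
  card_lt_card <| inter_subset_left.ssubset_of_ne fun hST =>
    hne (eq_of_subset_of_card_le (hST ▸ inter_subset_right) h.ge)

theorem sum_card_le_card_biUnion_add_sum_offDiag {ι : Type*} [DecidableEq ι] (I : Finset ι)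
    (X : ι → Finset α) :
    ∑ i ∈ I, #(X i) ≤ #(I.biUnion X) + ∑ p ∈ I.offDiag, #(X p.1 ∩ X p.2) := by
  induction I using Finset.induction_on with
  | empty => simp
  | @insert a I ha ih =>
    have hpairs : ∑ b ∈ I, #(X a ∩ X b) ≤ ∑ p ∈ {a} ×ˢ I ∪ I ×ˢ {a}, #(X p.1 ∩ X p.2) :=
      le_trans (by simp) (sum_le_sum_of_subset subset_union_left)
    have hdisj : Disjoint I.offDiag ({a} ×ˢ I ∪ I ×ˢ {a}) := by grind [disjoint_left]
    have hinter : #(X a ∩ I.biUnion X) ≤ ∑ b ∈ I, #(X a ∩ X b) := by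
      rw [inter_biUnion]; exact card_biUnion_le
    have hunion := card_union_add_card_inter (X a) (I.biUnion X)
    rw [sum_insert ha, biUnion_insert, offDiag_insert ha, union_assoc, sum_union hdisj]
    omega

theorem card_biUnion_piFinset_le (hs : ∀ S ∈ 𝒮, #S = s) (n : ℕ) :
    #(𝒮.biUnion fun S => Fintype.piFinset fun _ : Fin n => S) ≤ #𝒮 * s ^ n :=
  card_biUnion_le.trans_eq (sum_card_piFinset_const hs n)

theorem card_mul_pow_le_card_biUnion_piFinset_add {t : ℕ} (hs : ∀ S ∈ 𝒮, #S = s)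
    (ht : ∀ S ∈ 𝒮, ∀ T ∈ 𝒮, S ≠ T → #(S ∩ T) ≤ t) (n : ℕ) :
    #𝒮 * s ^ n ≤
      #(𝒮.biUnion fun S => Fintype.piFinset fun _ : Fin n => S) + #𝒮 ^ 2 * t ^ n := by
  have hpairs : ∑ p ∈ 𝒮.offDiag, #((Fintype.piFinset fun _ : Fin n => p.1) ∩
      Fintype.piFinset fun _ : Fin n => p.2) ≤ #𝒮 ^ 2 * t ^ n := by
    calc _ ≤ ∑ _p ∈ 𝒮.offDiag, t ^ n := sum_le_sum fun p hp => by
          obtain ⟨hS, hT, hST⟩ := mem_offDiag.1 hp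
          rw [← Fintype.piFinset_inter, Fintype.card_piFinset_const]
          exact Nat.pow_le_pow_left (ht _ hS _ hT hST) n
      _ ≤ #𝒮 ^ 2 * t ^ n := by
          rw [sum_const, smul_eq_mul, offDiag_card, sq]
          exact Nat.mul_le_mul_right _ (Nat.sub_le _ _)
  have := sum_card_le_card_biUnion_add_sum_offDiag 𝒮 fun S => Fintype.piFinset fun _ : Fin n => S
  rw [sum_card_piFinset_const hs] at this
  omega

end Finset

open Filter Topology in
theorem tendsto_div_mul_pow_of_le_of_sub_le {a : ℕ → ℝ} {c d s t : ℝ} (hc : 0 < c)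
    (ht : 0 ≤ t) (hts : t < s) (hupper : ∀ n, a n ≤ c * s ^ n)
    (hlower : ∀ n, c * s ^ n - d * t ^ n ≤ a n) :
    Tendsto (fun n => a n / (c * s ^ n)) atTop (𝓝 1) := by
  have hs : 0 < s := ht.trans_lt hts
  have hq : Tendsto (fun n => 1 - d / c * (t / s) ^ n) atTop (𝓝 1) := by
    simpa using ((tendsto_pow_atTop_nhds_zero_of_lt_one (div_nonneg ht hs.le)
      ((div_lt_one hs).2 hts)).const_mul (d / c)).const_sub 1
  refine tendsto_of_tendsto_of_tendsto_of_le_of_le hq tendsto_const_nhds (fun n => ?_) fun n => ?_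
  · rw [le_div_iff₀ (by positivity)]
    calc (1 - d / c * (t / s) ^ n) * (c * s ^ n) = c * s ^ n - d * t ^ n := by
          rw [div_pow]; field_simp
      _ ≤ a n := hlower n
  · exact (div_le_one (by positivity)).2 (hupper n)

namespace SPwrt

variable {m : ℕ}

instance (V A : Perm (Fin m)) : Decidable (SPwrt V A) := by
  unfold SPwrt; infer_instance

theorem mul_right_iff {V A : Perm (Fin m)} (B : Perm (Fin m)) :
    SPwrt (V * B) (A * B) ↔ SPwrt V A := by
  refine ⟨fun h c₁ c₂ c₃ => ?_, fun h c₁ c₂ c₃ => h (B c₁) (B c₂) (B c₃)⟩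
  simpa using h (B⁻¹ c₁) (B⁻¹ c₂) (B⁻¹ c₃)

theorem iff_mul_inv_one {V A : Perm (Fin m)} : SPwrt V A ↔ SPwrt (V * A⁻¹) 1 := by
  rw [← mul_right_iff A⁻¹, mul_inv_cancel]

theorem revPerm_mul_iff {V A : Perm (Fin m)} : SPwrt V (Fin.revPerm * A) ↔ SPwrt V A := by
  refine ⟨fun h c₁ c₂ c₃ hc => h c₃ c₂ c₁ ?_, fun h c₁ c₂ c₃ hc => h c₃ c₂ c₁ ?_⟩ <;>
    simp_all [Fin.rev_lt_rev]

theorem refl (A : Perm (Fin m)) : SPwrt A A :=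
  fun _ _ _ h => h.2.2.2.not_gt h.2.1

theorem revPerm_mul_self (A : Perm (Fin m)) : SPwrt (Fin.revPerm * A) A :=
  fun _ _ _ h => by simp [Fin.rev_lt_rev] at h; exact h.2.2.1.not_gt h.1

theorem monotone_or_antitone {f : Perm (Fin m)} (h : SPwrt f 1)
    (hrev : SPwrt (Fin.revPerm * f) 1) : Monotone f ∨ Antitone f := by
  by_contra hf
  obtain ⟨a, b, c, hab, hbc, hpeak | hvalley⟩ :=
    not_monotone_not_antitone_iff_exists_lt_lt.1 (not_or.1 hf)
  · exact h a b c ⟨hab, hbc, hpeak⟩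
  · exact hrev a b c ⟨hab, hbc, by simpa [Fin.rev_lt_rev] using hvalley⟩

end SPwrt

section SinglePeakedVotes

variable {m : ℕ}

def spVotes (A : Perm (Fin m)) : Finset (Perm (Fin m)) := {V | SPwrt V A}

/-- For `0 ∉ L`, the votes single-peaked for the identity axis whose ranks left of the peak form
`L` are exactly those along which `peakKey L` increases: first the ranks in `L` in decreasing
order, then the others in increasing order. -/
def peakKey (L : Finset (Fin m)) (v : Fin m) : ℤ := if v ∈ L then -v else v

def leftRanks [NeZero m] (V : Perm (Fin m)) : Finset (Fin m) := {v | V.symm v < V.symm 0}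

theorem zero_notMem_leftRanks [NeZero m] (V : Perm (Fin m)) : 0 ∉ leftRanks V := by
  simp [leftRanks]

theorem peakKey_injective [NeZero m] {L : Finset (Fin m)} (hL : 0 ∉ L) :
    Function.Injective (peakKey L) := by
  intro v w h
  have hv : v ∈ L → (v : ℕ) ≠ 0 := fun hv h0 => hL (Fin.val_eq_zero_iff.1 h0 ▸ hv)
  have hw : w ∈ L → (w : ℕ) ≠ 0 := fun hw h0 => hL (Fin.val_eq_zero_iff.1 h0 ▸ hw)
  unfold peakKey at h
  apply Fin.ext
  split_ifs at h <;> omega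

theorem spwrt_one_of_strictMono_peakKey {L : Finset (Fin m)} {V : Perm (Fin m)}
    (h : StrictMono (peakKey L ∘ V)) : SPwrt V 1 := by
  rintro c₁ c₂ c₃ ⟨h₁₂, h₂₃, hV₁, hV₃⟩
  have k₁₂ := h h₁₂
  have k₂₃ := h h₂₃
  simp only [Function.comp_apply, peakKey, Perm.one_apply, Fin.lt_def] at h₁₂ h₂₃ k₁₂ k₂₃ hV₁ hV₃
  split_ifs at k₁₂ k₂₃ <;> omega

theorem strictMono_peakKey_leftRanks [NeZero m] {V : Perm (Fin m)} (h : SPwrt V 1) :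
    StrictMono (peakKey (leftRanks V) ∘ V) := by
  set t := V.symm 0
  have hV0 : ∀ c, V c = 0 ↔ c = t := fun c => (Equiv.eq_symm_apply V).symm
  have hVt : V t = 0 := (hV0 t).2 rfl
  intro c c' hcc'
  have hne : V c ≠ V c' := V.injective.ne hcc'.ne
  -- no peak at `c'` left of `t`, nor at `c` right of `t`
  have hleft := h c c' t
  have hright := h t c c'
  have hc := hV0 c
  have hc' := hV0 c'
  simp only [Function.comp_apply, peakKey, leftRanks, mem_filter, mem_univ, true_and,
    Equiv.symm_apply_apply]
  simp only [Perm.one_apply, Fin.lt_def, Fin.ext_iff, Fin.val_zero, ne_eq]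
    at hleft hright hc hc' hcc' hVt hne ⊢
  split_ifs <;> omega

theorem leftRanks_eq_of_strictMono_peakKey [NeZero m] {L : Finset (Fin m)} (hL : 0 ∉ L)
    {V : Perm (Fin m)} (h : StrictMono (peakKey L ∘ V)) : leftRanks V = L := by
  ext v
  have hv : v ∈ L → (v : ℕ) ≠ 0 := fun hv h0 => hL (Fin.val_eq_zero_iff.1 h0 ▸ hv)
  rw [leftRanks, mem_filter, ← h.lt_iff_lt]
  simp only [mem_univ, true_and, Function.comp_apply, Equiv.apply_symm_apply, peakKey, if_neg hL]
  split_ifs with hvL <;> simp only [hvL, iff_true, iff_false, Fin.val_zero, Nat.cast_zero, not_lt]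
  · have := hv hvL; omega
  · positivity

theorem eq_of_strictMono_peakKey [NeZero m] {L : Finset (Fin m)} (hL : 0 ∉ L)
    {V W : Perm (Fin m)} (hV : StrictMono (peakKey L ∘ V)) (hW : StrictMono (peakKey L ∘ W)) :
    V = W := by
  have hrange : Set.range (peakKey L ∘ V) = Set.range (peakKey L ∘ W) := by
    simp only [Set.range_comp, V.surjective.range_eq, W.surjective.range_eq]
  exact Equiv.ext (congrFun ((peakKey_injective hL).comp_left ((hV.range_inj hW).1 hrange)))

theorem card_spVotes_one [NeZero m] : #(spVotes (1 : Perm (Fin m))) = 2 ^ (m - 1) := by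
  have hL : ∀ {L : Finset (Fin m)}, L ∈ (univ.erase 0).powerset → 0 ∉ L := fun hL h0 => by
    simpa using mem_powerset.1 hL h0
  have hsort : ∀ {L : Finset (Fin m)}, 0 ∉ L →
      StrictMono (peakKey L ∘ Tuple.sort (peakKey L)) := fun hL =>
    (Tuple.monotone_sort _).strictMono_of_injective
      ((peakKey_injective hL).comp (Tuple.sort _).injective)
  calc #(spVotes (1 : Perm (Fin m))) = #(univ.erase (0 : Fin m)).powerset := by
        refine card_nbij leftRanks (fun V _ => ?_) (fun V hV W hW h => ?_) (fun L hL' => ?_)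
        · simpa only [coe_powerset, Set.mem_preimage, Set.mem_powerset_iff, coe_subset,
            subset_erase, subset_univ, true_and] using zero_notMem_leftRanks V
        · simp only [spVotes, coe_filter, mem_univ, true_and, Set.mem_ofPred_eq] at hV hW
          refine eq_of_strictMono_peakKey (zero_notMem_leftRanks V)
            (strictMono_peakKey_leftRanks hV) ?_
          simpa [h] using strictMono_peakKey_leftRanks hW
        · exact ⟨Tuple.sort (peakKey L),
            by simpa [spVotes] using spwrt_one_of_strictMono_peakKey (hsort (hL hL')),
            leftRanks_eq_of_strictMono_peakKey (hL hL') (hsort (hL hL'))⟩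
    _ = 2 ^ (m - 1) := by simp

theorem card_spVotes [NeZero m] (A : Perm (Fin m)) : #(spVotes A) = 2 ^ (m - 1) := by
  rw [← card_spVotes_one]
  refine card_nbij' (· * A⁻¹) (· * A) (fun V hV => ?_) (fun V hV => ?_) (fun V _ => ?_)
    (fun V _ => ?_) <;> simp_all [spVotes, SPwrt.iff_mul_inv_one (A := A)]

theorem spVotes_eq_iff {A B : Perm (Fin m)} :
    spVotes B = spVotes A ↔ B = A ∨ B = Fin.revPerm * A := by
  refine ⟨fun h => ?_, ?_⟩
  · have hA : A ∈ spVotes B := h ▸ by simpa [spVotes] using SPwrt.refl A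
    have hrevA : Fin.revPerm * A ∈ spVotes B := h ▸ by
      simpa [spVotes] using SPwrt.revPerm_mul_self A
    have h₁ : SPwrt (A * B⁻¹) 1 := by
      rw [← SPwrt.iff_mul_inv_one]; simpa [spVotes] using hA
    have h₂ : SPwrt (Fin.revPerm * (A * B⁻¹)) 1 := by
      rw [← mul_assoc, ← SPwrt.iff_mul_inv_one]; simpa [spVotes] using hrevA
    rcases SPwrt.monotone_or_antitone h₁ h₂ with hf | hf
    · exact .inl (mul_inv_eq_one.1 (Perm.eq_one_of_monotone hf)).symm
    · right
      rw [mul_inv_eq_iff_eq_mul.1 (Perm.eq_revPerm_of_antitone hf), ← mul_assoc,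
        Fin.revPerm_mul_revPerm, one_mul]
  · rintro (rfl | rfl)
    · rfl
    · ext V; simp [spVotes, SPwrt.revPerm_mul_iff]

theorem two_mul_card_image_spVotes (hm : 2 ≤ m) :
    2 * #(univ.image (spVotes : Perm (Fin m) → Finset (Perm (Fin m)))) = m.factorial := by
  have hfiber : ∀ A : Perm (Fin m), #{B | spVotes B = spVotes A} = 2 := fun A => by
    rw [show ({B | spVotes B = spVotes A} : Finset _) = {A, Fin.revPerm * A} by
      ext B; simp [spVotes_eq_iff]]
    exact card_pair (Fin.revPerm_mul_ne_self hm A).symm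
  have hsum := card_eq_sum_card_image spVotes (univ : Finset (Perm (Fin m)))
  rw [card_univ, Fintype.card_perm, Fintype.card_fin, sum_const_nat (m := 2) ?_] at hsum
  · omega
  · simp only [mem_image]
    rintro _ ⟨A, -, rfl⟩
    exact hfiber A

theorem setOf_spElection_eq_biUnion {n : ℕ} :
    {P : Fin n → Perm (Fin m) | SPElection P} =
      ↑((univ.image (spVotes : Perm (Fin m) → _)).biUnion
        fun S => Fintype.piFinset fun _ : Fin n => S) := by
  ext P
  simp [SPElection, spVotes]

end SinglePeakedVotes

/-- For every fixed `m ≥ 2`, the ratio of the number of single-peaked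
`(n,m)`-elections to `(m!/2)·2^((m-1)n)` tends to `1` as `n → ∞`. -/
theorem single_peaked_count_asymptotics (m : ℕ) (hm : 2 ≤ m) :
    Filter.Tendsto
      (fun n : ℕ =>
        ({P : Fin n → Equiv.Perm (Fin m) | SPElection P}.ncard : ℝ) /
          (((Nat.factorial m : ℝ) / 2) * 2 ^ ((m - 1) * n)))
      Filter.atTop (nhds 1) := by
  have : NeZero m := ⟨by omega⟩
  set 𝒮 := univ.image (spVotes : Perm (Fin m) → Finset (Perm (Fin m)))
  have hs : ∀ S ∈ 𝒮, #S = 2 ^ (m - 1) := by simp [𝒮, card_spVotes]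
  have ht : ∀ S ∈ 𝒮, ∀ T ∈ 𝒮, S ≠ T → #(S ∩ T) ≤ 2 ^ (m - 1) - 1 := fun S hS T hT hST => by
    have := card_inter_lt_of_card_eq_of_ne ((hs S hS).trans (hs T hT).symm) hST
    rw [hs S hS] at this
    omega
  have hc : (m.factorial : ℝ) / 2 = #𝒮 := by
    rw [← two_mul_card_image_spVotes hm]; push_cast; ring
  simp_rw [setOf_spElection_eq_biUnion, Set.ncard_coe_finset, hc, pow_mul]
  refine tendsto_div_mul_pow_of_le_of_sub_le (d := (#𝒮 ^ 2 : ℕ)) (t := (2 ^ (m - 1) - 1 : ℕ))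
    (by positivity) (by positivity) ?_ (fun n => ?_) fun n => ?_
  · exact_mod_cast Nat.sub_lt (Nat.two_pow_pos _) one_pos
  · exact_mod_cast card_biUnion_piFinset_le hs n
  · rw [sub_le_iff_le_add]
    exact_mod_cast card_mul_pow_le_card_biUnion_piFinset_add hs ht n
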